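/- arXiv:1809.05908 — 6 statements merged into one kernel-verified Lean document; each statement's English description precedes it below -/
import Mathlib

section
/- For any (1,1)-tensor field A on a manifold M and any smooth functions f, g on M, the Haantjes torsion of the operator field fI + gA satisfies H_{fI+gA}(X,Y) = g^4 H_A(X,Y) for all vector fields X, Y. -/
open scoped BigOperators

section Setup

variable (R L : Type*) [CommRing R] [Algebra ℝ R] [LieRing L] [Module ℝ L]
  [LieAlgebra ℝ L] [Module R L] [IsScalarTower ℝ R L] [SMulCommClass R ℝ L]

/-- An abstract model of the calculus of vector fields on a smooth manifold `M`:
`R` plays the role of the smooth functions `C^∞(M)`, `L` the role of the Lie algebra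
of vector fields (an `R`-module), `anchor X` is the derivation `f ↦ X(f)` (the Lie
derivative of a function along a vector field), and `leibniz` is the Leibniz rule
for the Lie bracket of vector fields. -/
structure VectorFieldCalculus : Type _ where
  anchor : L → Derivation ℝ R R
  leibniz : ∀ (f : R) (X Y : L), ⁅X, f • Y⁆ = f • ⁅X, Y⁆ + (anchor X f) • Y

end Setup

variable {R L : Type*} [CommRing R] [Algebra ℝ R] [LieRing L] [Module ℝ L]
  [LieAlgebra ℝ L] [Module R L] [IsScalarTower ℝ R L] [SMulCommClass R ℝ L]

/-- The Nijenhuis torsion of a (1,1)-tensor field `A`. -/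
def nijenhuisTorsion (A : L →ₗ[R] L) (X Y : L) : L :=
  A (A ⁅X, Y⁆) + ⁅A X, A Y⁆ - A (⁅X, A Y⁆ + ⁅A X, Y⁆)

/-- The Frölicher–Nijenhuis bracket of two (1,1)-tensor fields `A`, `B`. -/
def fnBracket (A B : L →ₗ[R] L) (X Y : L) : L :=
  (A (B ⁅X, Y⁆) + B (A ⁅X, Y⁆)) + ⁅A X, B Y⁆ + ⁅B X, A Y⁆
    - A (⁅X, B Y⁆ + ⁅B X, Y⁆) - B (⁅X, A Y⁆ + ⁅A X, Y⁆)

/-- The Haantjes torsion of a (1,1)-tensor field `A`. -/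
def haantjesTorsion (A : L →ₗ[R] L) (X Y : L) : L :=
  A (A (nijenhuisTorsion A X Y)) + nijenhuisTorsion A (A X) (A Y)
    - A (nijenhuisTorsion A X (A Y) + nijenhuisTorsion A (A X) Y)

/-- The generalized Haantjes binary tensor of two (1,1)-tensor fields `A`, `B`. -/
def haantjesBinary (A B : L →ₗ[R] L) (X Y : L) : L :=
  (A (B (fnBracket A B X Y)) + B (A (fnBracket A B X Y)))
    + fnBracket A B (A X) (B Y) + fnBracket A B (B X) (A Y)
    - A (fnBracket A B X (B Y) + fnBracket A B (B X) Y)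
    - B (fnBracket A B X (A Y) + fnBracket A B (A X) Y)

/-- The generalized Nijenhuis torsion of level `m` of a (1,1)-tensor field `A`,
with `tau A 0 X Y = ⁅X, Y⁆`. -/
def tau (A : L →ₗ[R] L) : ℕ → L → L → L
  | 0 => fun X Y => ⁅X, Y⁆
  | (m + 1) => fun X Y =>
      A (A (tau A m X Y)) + tau A m (A X) (A Y)
        - A (tau A m X (A Y) + tau A m (A X) Y)

/-- Leibniz rule on the left slot of the bracket. -/
lemma lb_left (C : VectorFieldCalculus R L) (h : R) (W Z : L) :
    ⁅h • W, Z⁆ = h • ⁅W, Z⁆ - C.anchor Z h • W := by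
  rw [← lie_skew, C.leibniz, ← lie_skew W Z]
  module

/-- Bracket of two scaled vector fields. -/
lemma lb_both (C : VectorFieldCalculus R L) (u v : R) (P Q : L) :
    ⁅u • P, v • Q⁆ = (u * v) • ⁅P, Q⁆ + C.anchor (u • P) v • Q
      - (v * C.anchor Q u) • P := by
  rw [C.leibniz v (u • P) Q, lb_left C u P Q]
  module

/-- The anchor is a derivation in the scalar slot. -/
lemma anch_mul (C : VectorFieldCalculus R L) (Z : L) (a b : R) :
    C.anchor Z (a * b) = a * C.anchor Z b + b * C.anchor Z a := by
  simpa [smul_eq_mul] using (C.anchor Z).leibniz a b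


/-- Bracket of two scaled vector fields, mirrored expansion. -/
lemma lb_both' (C : VectorFieldCalculus R L) (u v : R) (P Q : L) :
    ⁅u • P, v • Q⁆ = (u * v) • ⁅P, Q⁆ - C.anchor (v • Q) u • P
      + (u * C.anchor P v) • Q := by
  rw [lb_left C u P (v • Q), C.leibniz v P Q]
  module

/-- The defect of `R`-linearity of the anchor satisfies a swap identity. -/
lemma anch_swap (C : VectorFieldCalculus R L) (u h : R) (Z W : L) :
    C.anchor (u • Z) h • W = (u * C.anchor Z h) • W + (h * C.anchor W u) • Z
      - C.anchor (h • W) u • Z := by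
  have h1 := lb_both C u h Z W
  have h2 := lb_both' C u h Z W
  rw [h1] at h2
  linear_combination (norm := module) h2

/-- Product rule for composite anchors. -/
lemma anch_prod (C : VectorFieldCalculus R L) (h r u : R) (W Z : L) :
    C.anchor ((h * r) • W) u • Z = h • (C.anchor (r • W) u • Z)
      + r • (C.anchor (h • W) u • Z) - (h * r) • (C.anchor W u • Z) := by
  have S1 := anch_swap C u (h * r) Z W
  have S2 := anch_swap C u h Z W
  have S3 := anch_swap C u r Z W
  simp only [anch_mul C] at S1
  linear_combination (norm := module) S1 - h • S3 - r • S2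

set_option maxHeartbeats 4000000 in
/-- `H_{fI + gA}(X,Y) = g⁴ • H_A(X,Y)`. -/
theorem haantjes_smul_id_add_smul (C : VectorFieldCalculus R L)
    (A : L →ₗ[R] L) (f g : R) (X Y : L) :
    haantjesTorsion (f • (LinearMap.id : L →ₗ[R] L) + g • A) X Y
      = g ^ 4 • haantjesTorsion A X Y := by
  simp only [haantjesTorsion, nijenhuisTorsion, LinearMap.add_apply,
    LinearMap.smul_apply, LinearMap.id_coe, id_eq, map_add, map_sub, map_smul,
    smul_add, smul_sub, smul_smul, lie_add, add_lie, lie_sub, sub_lie]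
  simp only [lb_both C]
  simp only [C.leibniz, lb_left C]
  simp only [map_add, map_sub, map_smul, smul_add, smul_sub]
  simp only [anch_prod C]
  simp only [anch_mul C, map_add, map_sub, map_smul, smul_add, smul_sub, smul_smul, mul_add, add_mul,
    mul_comm, mul_left_comm, mul_assoc]
  module
end

section
/- If two (1,1)-tensor fields A and B commute (AB = BA), then for all smooth functions f, g on M, H_{fA, gB}(X,Y) = f²g² H_{A,B}(X,Y), where H_{A,B} is the generalized Haantjes binary tensor. -/
open scoped BigOperators

variable {R L : Type*} [CommRing R] [Algebra ℝ R] [LieRing L] [Module ℝ L]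
  [LieAlgebra ℝ L] [Module R L] [IsScalarTower ℝ R L] [SMulCommClass R ℝ L]

lemma lie_smul_left' (C : VectorFieldCalculus R L) (f : R) (X Y : L) :
    ⁅f • X, Y⁆ = f • ⁅X, Y⁆ - (C.anchor Y f) • X := by
  rw [← neg_neg ⁅f • X, Y⁆, ← lie_skew, C.leibniz, ← lie_skew X Y]
  module

set_option maxHeartbeats 4000000 in
/-- if `A` and `B` commute, `H_{fA,gB}(X,Y) = f²g² H_{A,B}(X,Y)`. -/
theorem haantjesBinary_smul_smul (C : VectorFieldCalculus R L)
    (A B : L →ₗ[R] L) (hcomm : A ∘ₗ B = B ∘ₗ A) (f g : R) (X Y : L) :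
    haantjesBinary (f • A) (g • B) X Y
      = (f ^ 2 * g ^ 2) • haantjesBinary A B X Y := by
  have hAB : ∀ z : L, A (B z) = B (A z) := fun z => LinearMap.congr_fun hcomm z
  simp only [haantjesBinary, fnBracket, LinearMap.smul_apply, map_add, map_sub, map_smul,
    C.leibniz, lie_smul_left' C, smul_add, smul_sub, smul_smul, Derivation.leibniz,
    smul_eq_mul, hAB]
  module
end

section
/- The generalized Nijenhuis torsion of level m admits the explicit expansion τ⁽ᵐ⁾_A(X,Y) = Σ_{p=0}^{m} Σ_{q=0}^{m} (−1)^{2m−p−q} C(m,p) C(m,q) A^{p+q}[A^{m−p}X, A^{m−q}Y] for all vector fields X, Y and all m ≥ 0. -/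
open scoped BigOperators

variable {R L : Type*} [CommRing R] [Algebra ℝ R] [LieRing L] [Module ℝ L]
  [LieAlgebra ℝ L] [Module R L] [IsScalarTower ℝ R L] [SMulCommClass R ℝ L]

section AuxOps

variable (A : L →ₗ[R] L)

/-- The operator `B ↦ A ∘ B` on bilinear-ish maps. -/
private def opA : (L → L → L) →ₗ[ℤ] (L → L → L) where
  toFun B := fun X Y => A (B X Y)
  map_add' B C := by funext X Y; simp
  map_smul' z B := by funext X Y; simp

/-- The operator `B ↦ B (A ·) ·`. -/
private def opL : (L → L → L) →ₗ[ℤ] (L → L → L) where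
  toFun B := fun X Y => B (A X) Y
  map_add' B C := rfl
  map_smul' z B := rfl

/-- The operator `B ↦ B · (A ·)`. -/
private def opR : (L → L → L) →ₗ[ℤ] (L → L → L) where
  toFun B := fun X Y => B X (A Y)
  map_add' B C := rfl
  map_smul' z B := rfl

private lemma opA_apply (B : L → L → L) (X Y : L) : opA A B X Y = A (B X Y) := rfl
private lemma opL_apply (B : L → L → L) (X Y : L) : opL A B X Y = B (A X) Y := rfl
private lemma opR_apply (B : L → L → L) (X Y : L) : opR A B X Y = B X (A Y) := rfl

private lemma commAL : Commute (opA A) (opL A) := rfl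
private lemma commAR : Commute (opA A) (opR A) := rfl
private lemma commLR : Commute (opL A) (opR A) := rfl

private lemma opA_pow (n : ℕ) (B : L → L → L) (X Y : L) :
    ((opA A ^ n) B) X Y = (A ^ n) (B X Y) := by
  induction n with
  | zero => simp
  | succ n ih =>
    rw [pow_succ' (opA A), Module.End.mul_apply, pow_succ' A, Module.End.mul_apply,
      opA_apply, ih]

private lemma opL_pow (n : ℕ) (B : L → L → L) (X Y : L) :
    ((opL A ^ n) B) X Y = B ((A ^ n) X) Y := by
  induction n generalizing B with
  | zero => simp
  | succ n ih =>
    rw [pow_succ (opL A), Module.End.mul_apply, pow_succ' A, Module.End.mul_apply, ih,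
      opL_apply]

private lemma opR_pow (n : ℕ) (B : L → L → L) (X Y : L) :
    ((opR A ^ n) B) X Y = B X ((A ^ n) Y) := by
  induction n generalizing B with
  | zero => simp
  | succ n ih =>
    rw [pow_succ (opR A), Module.End.mul_apply, pow_succ' A, Module.End.mul_apply, ih,
      opR_apply]

private lemma tau_eq_op (m : ℕ) :
    tau A m = (((opA A - opL A) ^ m) * ((opA A - opR A) ^ m))
      (fun X Y => ⁅X, Y⁆) := by
  induction m with
  | zero => funext X Y; simp [tau]
  | succ m ih =>
    have hc : Commute (opA A - opL A) (opA A - opR A) :=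
      (((Commute.refl (opA A)).sub_left (commAL A).symm)).sub_right
        ((commAR A).sub_left (commLR A))
    have key : ((opA A - opL A) ^ (m + 1)) * ((opA A - opR A) ^ (m + 1))
        = ((opA A - opL A) * (opA A - opR A))
            * (((opA A - opL A) ^ m) * ((opA A - opR A) ^ m)) := by
      rw [pow_succ' (opA A - opL A), pow_succ' (opA A - opR A),
        (hc.pow_left m).mul_mul_mul_comm]
    rw [key, Module.End.mul_apply, ← ih]
    funext X Y
    show A (A (tau A m X Y)) + tau A m (A X) (A Y)
        - A (tau A m X (A Y) + tau A m (A X) Y) = _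
    simp only [Module.End.mul_apply, LinearMap.sub_apply, Pi.sub_apply,
      opA_apply, opL_apply, opR_apply, map_add, map_sub]
    abel

end AuxOps

private lemma comm_sub_pow {S : Type*} [Ring S] {x y : S} (h : Commute x y) (n : ℕ) :
    (x - y) ^ n = ∑ p ∈ Finset.range (n + 1),
      (((-1 : ℤ) ^ (n - p) * n.choose p) • (x ^ p * y ^ (n - p))) := by
  rw [sub_eq_add_neg, h.neg_right.add_pow]
  refine Finset.sum_congr rfl fun p hp => ?_
  rw [neg_pow, zsmul_eq_mul]
  push_cast
  have h1 : Commute ((-1 : S) ^ (n - p)) (x ^ p) :=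
    ((Commute.neg_one_left x).pow_pow _ _)
  have h2 : Commute ((n.choose p : S)) (x ^ p * y ^ (n - p)) := Nat.cast_commute _ _
  calc x ^ p * ((-1 : S) ^ (n - p) * y ^ (n - p)) * (n.choose p : S)
      = (x ^ p * (-1 : S) ^ (n - p)) * y ^ (n - p) * (n.choose p : S) := by
        noncomm_ring
    _ = ((-1 : S) ^ (n - p) * x ^ p) * y ^ (n - p) * (n.choose p : S) := by
        rw [h1.eq]
    _ = (-1 : S) ^ (n - p) * ((x ^ p * y ^ (n - p)) * (n.choose p : S)) := by
        noncomm_ring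
    _ = (-1 : S) ^ (n - p) * ((n.choose p : S) * (x ^ p * y ^ (n - p))) := by
        rw [h2.eq]
    _ = (-1 : S) ^ (n - p) * (n.choose p : S) * (x ^ p * y ^ (n - p)) := by
        rw [mul_assoc]

/-- the explicit expansion of the generalized Nijenhuis torsion of level `m`. -/
theorem tau_explicit_formula (C : VectorFieldCalculus R L)
    (A : L →ₗ[R] L) (m : ℕ) (X Y : L) :
    tau A m X Y
      = ∑ p ∈ Finset.range (m + 1), ∑ q ∈ Finset.range (m + 1),
          (((-1 : ℤ) ^ (2 * m - p - q)) * (m.choose p) * (m.choose q)) •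
            (A ^ (p + q)) ⁅(A ^ (m - p)) X, (A ^ (m - q)) Y⁆ := by
  have pow_pow_apply : ∀ (p q : ℕ) (v : L), (A ^ p) ((A ^ q) v) = (A ^ (p + q)) v := by
    intro p q v
    rw [pow_add, Module.End.mul_apply]
  have h := congrFun (congrFun (tau_eq_op A m) X) Y
  rw [h, comm_sub_pow (commAL A) m, comm_sub_pow (commAR A) m, Finset.sum_mul_sum]
  simp only [smul_mul_smul_comm, LinearMap.sum_apply, Finset.sum_apply,
    LinearMap.smul_apply, Pi.smul_apply, Module.End.mul_apply,
    opA_pow, opL_pow, opR_pow, pow_pow_apply]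
  refine Finset.sum_congr rfl fun p hp => Finset.sum_congr rfl fun q hq => ?_
  have hp' : p ≤ m := Nat.lt_succ_iff.mp (Finset.mem_range.mp hp)
  have hq' : q ≤ m := Nat.lt_succ_iff.mp (Finset.mem_range.mp hq)
  congr 1
  have e : (-1 : ℤ) ^ (m - p) * (-1 : ℤ) ^ (m - q) = (-1 : ℤ) ^ (2 * m - p - q) := by
    rw [← pow_add]
    congr 1
    omega
  rw [mul_mul_mul_comm, e, ← mul_assoc]
end

section
/- For any (1,1)-tensor field A, any smooth functions f, g on M, and any integer m ≥ 2, the generalized Nijenhuis torsion satisfies τ⁽ᵐ⁾_{fI+gA}(X,Y) = g^{2m} τ⁽ᵐ⁾_A(X,Y). In particular τ⁽ᵐ⁾_I(X,Y) = 0 for all m ≥ 1. -/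
open scoped BigOperators

variable {R L : Type*} [CommRing R] [Algebra ℝ R] [LieRing L] [Module ℝ L]
  [LieAlgebra ℝ L] [Module R L] [IsScalarTower ℝ R L] [SMulCommClass R ℝ L]

set_option linter.unusedSectionVars false

def hstep (B : L →ₗ[R] L) (T : L → L → L) (X Y : L) : L :=
  B (B (T X Y)) + T (B X) (B Y) - B (T X (B Y) + T (B X) Y)

lemma tau_succ (A : L →ₗ[R] L) (m : ℕ) (X Y : L) :
    tau A (m+1) X Y = hstep A (tau A m) X Y := rfl

lemma tau_two (A : L →ₗ[R] L) (X Y : L) :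
    tau A 2 X Y = hstep A (tau A 1) X Y := rfl

lemma br_left (C : VectorFieldCalculus R L) (h : R) (X Y : L) :
    ⁅h • X, Y⁆ = h • ⁅X, Y⁆ - (C.anchor Y h) • X := by
  rw [← neg_neg ⁅h • X, Y⁆, ← lie_skew, C.leibniz]
  rw [neg_add, ← lie_skew X Y, smul_neg]
  abel

set_option linter.unusedSectionVars false

def sixT (A : L →ₗ[R] L) (h1 h2 h3 k1 k2 k3 : L → R) (X Y : L) : L :=
  h1 X • Y + h2 X • A Y + h3 X • A (A Y) + k1 Y • X + k2 Y • A X + k3 Y • A (A X)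

lemma tau_one_affine (C : VectorFieldCalculus R L) (A : L →ₗ[R] L) (f g : R) (X Y : L) :
    tau (f • (LinearMap.id : L →ₗ[R] L) + g • A) 1 X Y
      = g ^ 2 • tau A 1 X Y
        + sixT A
            (fun X => C.anchor (f•X) f + C.anchor (g•A X) f - f * C.anchor X f)
            (fun X => C.anchor (f•X) g + C.anchor (g•A X) g - g * C.anchor X f - f * C.anchor X g)
            (fun X => -(g * C.anchor X g))
            (fun Y => -(g * C.anchor (A Y) f))
            (fun Y => g * C.anchor Y f - g * C.anchor (A Y) g)
            (fun Y => g * C.anchor Y g) X Y := by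
  show (f • (LinearMap.id : L →ₗ[R] L) + g • A) ((f • (LinearMap.id : L →ₗ[R] L) + g • A) ⁅X, Y⁆)
      + ⁅(f • (LinearMap.id : L →ₗ[R] L) + g • A) X, (f • (LinearMap.id : L →ₗ[R] L) + g • A) Y⁆
      - (f • (LinearMap.id : L →ₗ[R] L) + g • A)
          (⁅X, (f • (LinearMap.id : L →ₗ[R] L) + g • A) Y⁆
            + ⁅(f • (LinearMap.id : L →ₗ[R] L) + g • A) X, Y⁆) = _
  rw [show tau A 1 X Y = A (A ⁅X, Y⁆) + ⁅A X, A Y⁆ - A (⁅X, A Y⁆ + ⁅A X, Y⁆) from rfl]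
  simp only [LinearMap.add_apply, LinearMap.smul_apply, LinearMap.id_apply]
  simp only [add_lie, lie_add]
  simp only [C.leibniz]
  simp only [br_left C]
  simp only [sixT, map_add, map_sub, map_smul, smul_add, smul_sub, smul_smul]
  module

lemma hstep_sixT (B A : L →ₗ[R] L) (hc : ∀ Z, B (A Z) = A (B Z))
    (h1 h2 h3 k1 k2 k3 : L → R) (X Y : L) :
    hstep B (sixT A h1 h2 h3 k1 k2 k3) X Y = 0 := by
  simp only [hstep, sixT, map_add, map_smul, hc]
  abel

lemma comm_affine (A : L →ₗ[R] L) (f g : R) (Z : L) :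
    (f • (LinearMap.id : L →ₗ[R] L) + g • A) (A Z)
      = A ((f • (LinearMap.id : L →ₗ[R] L) + g • A) Z) := by
  simp [map_add, map_smul]

structure IsBil (T : L → L → L) : Prop where
  addl : ∀ X X' Y, T (X + X') Y = T X Y + T X' Y
  addr : ∀ X Y Y', T X (Y + Y') = T X Y + T X Y'
  smull : ∀ (c : R) (X Y : L), T (c • X) Y = c • T X Y
  smulr : ∀ (c : R) (X Y : L), T X (c • Y) = c • T X Y

lemma isBil_tau_one (C : VectorFieldCalculus R L) (A : L →ₗ[R] L) :
    IsBil (R := R) (tau A 1) := by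
  have h : ∀ X Y : L, tau A 1 X Y = A (A ⁅X, Y⁆) + ⁅A X, A Y⁆ - A (⁅X, A Y⁆ + ⁅A X, Y⁆) :=
    fun X Y => rfl
  constructor
  · intro X X' Y; simp only [h, map_add, add_lie, lie_add]; abel
  · intro X Y Y'; simp only [h, map_add, add_lie, lie_add]; abel
  · intro c X Y
    simp only [h, map_smul, br_left C, map_add, map_sub, smul_add, smul_sub]
    module
  · intro c X Y
    simp only [h, map_smul, C.leibniz, map_add, map_sub, smul_add, smul_sub]
    module

lemma isBil_hstep (A : L →ₗ[R] L) (T : L → L → L) (hT : IsBil (R := R) T) :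
    IsBil (R := R) (hstep A T) := by
  constructor
  · intro X X' Y
    simp only [hstep, map_add, hT.addl, hT.addr]; abel
  · intro X Y Y'
    simp only [hstep, map_add, hT.addl, hT.addr]; abel
  · intro c X Y
    simp only [hstep, map_smul, hT.smull, hT.smulr, ← smul_add, map_add, smul_sub]
  · intro c X Y
    simp only [hstep, map_smul, hT.smull, hT.smulr, ← smul_add, map_add, smul_sub]

lemma isBil_tau (C : VectorFieldCalculus R L) (A : L →ₗ[R] L) (m : ℕ) :
    IsBil (R := R) (tau A (m + 1)) := by
  induction m with
  | zero => exact isBil_tau_one C A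
  | succ k ih => exact isBil_hstep A _ ih

lemma hstep_decomp (B : L →ₗ[R] L) (T S1 S2 : L → L → L)
    (h : ∀ X Y, T X Y = S1 X Y + S2 X Y) (X Y : L) :
    hstep B T X Y = hstep B S1 X Y + hstep B S2 X Y := by
  simp only [hstep, h, map_add]; abel

lemma hstep_smul (A : L →ₗ[R] L) (f g c : R) (T S : L → L → L)
    (hS : ∀ X Y, S X Y = c • T X Y) (hT : IsBil (R := R) T) (X Y : L) :
    hstep (f • (LinearMap.id : L →ₗ[R] L) + g • A) S X Y
      = (c * g ^ 2) • hstep A T X Y := by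
  simp only [hstep, hS, LinearMap.add_apply, LinearMap.smul_apply, LinearMap.id_apply,
    hT.addl, hT.addr, hT.smull, hT.smulr, map_add, map_smul]
  module


/-- `τ⁽ᵐ⁾_{fI+gA} = g^{2m} τ⁽ᵐ⁾_A` for `m ≥ 2`, and `τ⁽ᵐ⁾_I = 0` for `m ≥ 1`. -/
theorem tau_affine_and_id (C : VectorFieldCalculus R L)
    (A : L →ₗ[R] L) (f g : R) :
    (∀ m : ℕ, 2 ≤ m → ∀ X Y : L,
        tau (f • (LinearMap.id : L →ₗ[R] L) + g • A) m X Y = g ^ (2 * m) • tau A m X Y) ∧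
    (∀ m : ℕ, 1 ≤ m → ∀ X Y : L,
        tau (LinearMap.id : L →ₗ[R] L) m X Y = 0) := by
  set B : L →ₗ[R] L := f • (LinearMap.id : L →ₗ[R] L) + g • A with hB
  constructor
  · have key : ∀ k : ℕ, ∀ X Y : L,
        tau B (k + 2) X Y = g ^ (2 * (k + 2)) • tau A (k + 2) X Y := by
      intro k
      induction k with
      | zero =>
        intro X Y
        have e2 : tau B (0 + 2) X Y = hstep B (tau B 1) X Y := rfl
        rw [e2, hstep_decomp B (tau B 1) (fun X Y => g ^ 2 • tau A 1 X Y)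
          (sixT A
            (fun X => C.anchor (f•X) f + C.anchor (g•A X) f - f * C.anchor X f)
            (fun X => C.anchor (f•X) g + C.anchor (g•A X) g - g * C.anchor X f - f * C.anchor X g)
            (fun X => -(g * C.anchor X g))
            (fun Y => -(g * C.anchor (A Y) f))
            (fun Y => g * C.anchor Y f - g * C.anchor (A Y) g)
            (fun Y => g * C.anchor Y g))
          (tau_one_affine C A f g) X Y]
        rw [hstep_smul A f g (g ^ 2) (tau A 1) _ (fun _ _ => rfl) (isBil_tau_one C A) X Y]
        rw [hstep_sixT B A (comm_affine A f g) _ _ _ _ _ _ X Y]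
        have e3 : hstep A (tau A 1) X Y = tau A (0 + 2) X Y := rfl
        rw [e3, add_zero]
        congr 1
        ring
      | succ k ih =>
        intro X Y
        have e2 : tau B (k + 1 + 2) X Y = hstep B (tau B (k + 2)) X Y := rfl
        rw [e2, hstep_smul A f g (g ^ (2 * (k + 2))) (tau A (k + 2)) _ ih
          (isBil_tau C A (k + 1)) X Y]
        have e3 : hstep A (tau A (k + 2)) X Y = tau A (k + 1 + 2) X Y := rfl
        rw [e3]
        congr 1
        ring
    intro m hm X Y
    obtain ⟨k, rfl⟩ : ∃ k, m = k + 2 := ⟨m - 2, by omega⟩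
    exact key k X Y
  · have key : ∀ k : ℕ, ∀ X Y : L,
        tau (LinearMap.id : L →ₗ[R] L) (k + 1) X Y = 0 := by
      intro k
      induction k with
      | zero =>
        intro X Y
        show (LinearMap.id : L →ₗ[R] L) ((LinearMap.id : L →ₗ[R] L) ⁅X, Y⁆)
            + ⁅(LinearMap.id : L →ₗ[R] L) X, (LinearMap.id : L →ₗ[R] L) Y⁆
            - (LinearMap.id : L →ₗ[R] L) (⁅X, (LinearMap.id : L →ₗ[R] L) Y⁆
              + ⁅(LinearMap.id : L →ₗ[R] L) X, Y⁆) = 0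
        simp only [LinearMap.id_apply]
        abel
      | succ k ih =>
        intro X Y
        have e : tau (LinearMap.id : L →ₗ[R] L) (k + 2) X Y
            = hstep (LinearMap.id : L →ₗ[R] L) (tau (LinearMap.id : L →ₗ[R] L) (k + 1)) X Y := rfl
        rw [e]
        simp [hstep, ih]
    intro m hm X Y
    obtain ⟨k, rfl⟩ : ∃ k, m = k + 1 := ⟨m - 1, by omega⟩
    exact key k X Y
end

section
/- Let D be an involutive distribution on M that is invariant under a (1,1)-tensor field A. Then for any polynomial P(A) = Σₖ aₖ(x)Aᵏ with smooth coefficient functions and any m ≥ 1, τ⁽ᵐ⁾_{P(A)}(D,D) ⊆ D, i.e., the generalized Nijenhuis torsion of level m of P(A) evaluated on vector fields in D lies in D. -/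
open scoped BigOperators

variable {R L : Type*} [CommRing R] [Algebra ℝ R] [LieRing L] [Module ℝ L]
  [LieAlgebra ℝ L] [Module R L] [IsScalarTower ℝ R L] [SMulCommClass R ℝ L]

/-- if `D` is an involutive `A`-invariant distribution, then
`τ⁽ᵐ⁾_{P(A)}(D,D) ⊆ D` for any polynomial `P(A) = Σₖ aₖ Aᵏ` with function coefficients. -/
theorem tau_poly_invariant (C : VectorFieldCalculus R L)
    (A : L →ₗ[R] L) (D : Submodule R L)
    (hAD : ∀ X ∈ D, A X ∈ D)
    (hinv : ∀ X ∈ D, ∀ Y ∈ D, ⁅X, Y⁆ ∈ D)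
    (n : ℕ) (a : ℕ → R) :
    ∀ m : ℕ, 1 ≤ m → ∀ X ∈ D, ∀ Y ∈ D,
      tau (∑ k ∈ Finset.Icc 1 n, a k • (A ^ k)) m X Y ∈ D := by
  set P : L →ₗ[R] L := ∑ k ∈ Finset.Icc 1 n, a k • (A ^ k) with hP
  have hpow : ∀ k, ∀ X ∈ D, (A ^ k) X ∈ D := by
    intro k
    induction k with
    | zero => intro X hX; simpa using hX
    | succ k ih =>
        intro X hX
        rw [pow_succ, Module.End.mul_apply]
        exact ih _ (hAD X hX)
  have hPD : ∀ X ∈ D, P X ∈ D := by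
    intro X hX
    rw [hP]
    simp only [LinearMap.sum_apply, LinearMap.smul_apply]
    exact Submodule.sum_mem _ fun k _ => Submodule.smul_mem _ _ (hpow k X hX)
  have main : ∀ m, ∀ X ∈ D, ∀ Y ∈ D, tau P m X Y ∈ D := by
    intro m
    induction m with
    | zero => intro X hX Y hY; exact hinv X hX Y hY
    | succ m ih =>
        intro X hX Y hY
        simp only [tau]
        exact Submodule.sub_mem _
          (Submodule.add_mem _ (hPD _ (hPD _ (ih X hX Y hY)))
            (ih _ (hPD X hX) _ (hPD Y hY)))
          (hPD _ (Submodule.add_mem _ (ih X hX _ (hPD Y hY)) (ih _ (hPD X hX) Y hY)))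
  intro m _ X hX Y hY
  exact main m X hX Y hY
end

section
/- Let A be a (1,1)-tensor field with Riesz index ρ. The following are equivalent: (1) the distribution ker A^ρ is involutive; (2) T_{A^ρ}(ker A^ρ, ker A^ρ) ⊆ ker A^ρ; (3) T_{A^ρ}(ker A^ρ, ker A^ρ) = 0, where T_{A^ρ} is the Nijenhuis torsion of A^ρ. -/
open scoped BigOperators

variable {R L : Type*} [CommRing R] [Algebra ℝ R] [LieRing L] [Module ℝ L]
  [LieAlgebra ℝ L] [Module R L] [IsScalarTower ℝ R L] [SMulCommClass R ℝ L]

lemma ker_pow_stab (A : L →ₗ[R] L) (ρ : ℕ)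
    (hρ : LinearMap.ker (A ^ ρ) = LinearMap.ker (A ^ (ρ + 1))) :
    ∀ k, LinearMap.ker (A ^ (ρ + k)) = LinearMap.ker (A ^ ρ) := by
  intro k
  induction k with
  | zero => rfl
  | succ k ih =>
    apply le_antisymm
    · intro x hx
      rw [LinearMap.mem_ker] at hx ⊢
      have h1 : (A ^ (ρ + (k + 1))) x = (A ^ (ρ + 1)) ((A ^ k) x) := by
        rw [← Module.End.mul_apply, ← pow_add]
        ring_nf
      have h2 : (A ^ k) x ∈ LinearMap.ker (A ^ (ρ + 1)) := by
        rw [LinearMap.mem_ker, ← h1, hx]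
      rw [← hρ, LinearMap.mem_ker] at h2
      have h3 : (A ^ (ρ + k)) x = (A ^ ρ) ((A ^ k) x) := by
        rw [← Module.End.mul_apply, ← pow_add]
      have : x ∈ LinearMap.ker (A ^ (ρ + k)) := by
        rw [LinearMap.mem_ker, h3, h2]
      rw [ih, LinearMap.mem_ker] at this
      exact this
    · intro x hx
      rw [LinearMap.mem_ker] at hx ⊢
      have : (A ^ (ρ + (k + 1))) x = (A ^ (k + 1)) ((A ^ ρ) x) := by
        rw [← Module.End.mul_apply, ← pow_add]
        ring_nf
      rw [this, hx, map_zero]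

lemma nij_ker (A : L →ₗ[R] L) (ρ : ℕ) {X Y : L}
    (hX : X ∈ LinearMap.ker (A ^ ρ)) (hY : Y ∈ LinearMap.ker (A ^ ρ)) :
    nijenhuisTorsion (A ^ ρ) X Y = (A ^ ρ) ((A ^ ρ) ⁅X, Y⁆) := by
  rw [LinearMap.mem_ker] at hX hY
  simp [nijenhuisTorsion, hX, hY]

/-- for `ρ` the Riesz index of `A`, involutivity of `ker A^ρ` is equivalent both
to `T_{A^ρ}(ker A^ρ, ker A^ρ) ⊆ ker A^ρ` and to `T_{A^ρ}(ker A^ρ, ker A^ρ) = 0`. -/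
theorem ker_riesz_involutive_iff (C : VectorFieldCalculus R L)
    (A : L →ₗ[R] L) (ρ : ℕ)
    (hρ : LinearMap.ker (A ^ ρ) = LinearMap.ker (A ^ (ρ + 1)))
    (hmin : ∀ k < ρ, LinearMap.ker (A ^ k) ≠ LinearMap.ker (A ^ (k + 1))) :
    ((∀ X ∈ LinearMap.ker (A ^ ρ), ∀ Y ∈ LinearMap.ker (A ^ ρ),
        ⁅X, Y⁆ ∈ LinearMap.ker (A ^ ρ))
      ↔ (∀ X ∈ LinearMap.ker (A ^ ρ), ∀ Y ∈ LinearMap.ker (A ^ ρ),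
        nijenhuisTorsion (A ^ ρ) X Y ∈ LinearMap.ker (A ^ ρ))) ∧
    ((∀ X ∈ LinearMap.ker (A ^ ρ), ∀ Y ∈ LinearMap.ker (A ^ ρ),
        ⁅X, Y⁆ ∈ LinearMap.ker (A ^ ρ))
      ↔ (∀ X ∈ LinearMap.ker (A ^ ρ), ∀ Y ∈ LinearMap.ker (A ^ ρ),
        nijenhuisTorsion (A ^ ρ) X Y = 0)) := by
  have stab := ker_pow_stab A ρ hρ
  have h2 : ∀ Z : L, (A ^ ρ) ((A ^ ρ) Z) = 0 ↔ Z ∈ LinearMap.ker (A ^ ρ) := by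
    intro Z
    rw [← Module.End.mul_apply, ← pow_add, ← LinearMap.mem_ker, stab ρ]
  have h3 : ∀ Z : L, (A ^ ρ) ((A ^ ρ) ((A ^ ρ) Z)) = 0 ↔ Z ∈ LinearMap.ker (A ^ ρ) := by
    intro Z
    rw [← Module.End.mul_apply, ← Module.End.mul_apply, ← pow_add, ← pow_add,
      ← LinearMap.mem_ker, add_assoc, stab (ρ + ρ)]
  constructor
  · constructor
    · intro h X hX Y hY
      rw [LinearMap.mem_ker, nij_ker A ρ hX hY, h3]
      exact h X hX Y hY
    · intro h X hX Y hY
      have := h X hX Y hY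
      rw [LinearMap.mem_ker, nij_ker A ρ hX hY, h3] at this
      exact this
  · constructor
    · intro h X hX Y hY
      rw [nij_ker A ρ hX hY, h2]
      exact h X hX Y hY
    · intro h X hX Y hY
      have := h X hX Y hY
      rw [nij_ker A ρ hX hY, h2] at this
      exact this
end
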